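/- arXiv:2502.15181 — 3 statements merged into one kernel-verified Lean document; each statement's English description precedes it below -/
import Mathlib

section
/- Let q be an acyclic natural join query with connected join graph G_q, where each edge {R,S} of G_q is weighted by w(R,S) = |attr(R) ∩ attr(S)|. Then every maximum spanning tree of the weighted graph G_q is a join tree of q. -/
namespace JoinQuery

universe u

variable {ι : Type} {α : Type}

/-- A *tuple* over a finite set `X` of attributes, with values in the domain `D`:
a function assigning a domain value to each attribute of `X`. -/
def Tuple (D : Type u) {α : Type} (X : Finset α) : Type u := {a // a ∈ X} → D

/-- Projection: the restriction of a tuple over `X` to a subset `Y ⊆ X` of the attributes. -/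
def restrict {D : Type u} {X Y : Finset α} (h : Y ⊆ X) (t : Tuple D X) : Tuple D Y :=
  fun a => t ⟨a.1, h a.2⟩

/-- A database instance for the natural join query whose relation symbols are the elements
of `ι` with attribute sets given by `attr`: a finite set of tuples for every relation. -/
structure Inst (attr : ι → Finset α) (D : Type u) where
  rel : ∀ R : ι, Set (Tuple D (attr R))
  finite : ∀ R : ι, (rel R).Finite

/-- The set of attributes of the (sub)query given by the set `S` of relations. -/
def attrsOf [DecidableEq α] (attr : ι → Finset α) (S : Finset ι) : Finset α :=
  S.biUnion attr

theorem attr_subset_attrsOf [DecidableEq α] (attr : ι → Finset α) {S : Finset ι} {R : ι}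
    (hR : R ∈ S) : attr R ⊆ attrsOf attr S :=
  Finset.subset_biUnion_of_mem attr hR

theorem attrsOf_mono [DecidableEq α] (attr : ι → Finset α) {S₁ S₂ : Finset ι} (h : S₁ ⊆ S₂) :
    attrsOf attr S₁ ⊆ attrsOf attr S₂ :=
  Finset.biUnion_subset_biUnion_of_subset_left attr h

/-- The output of the natural join of the relations in `S`, on the instance `I`:
all tuples over the attributes of `S` whose restriction to each relation `R ∈ S`
belongs to `I.rel R`. -/
def output [DecidableEq α] {D : Type u} (attr : ι → Finset α) (I : Inst attr D)
    (S : Finset ι) : Set (Tuple D (attrsOf attr S)) :=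
  {t | ∀ (R : ι) (hR : R ∈ S), restrict (attr_subset_attrsOf attr hR) t ∈ I.rel R}

/-- The output `q(I)` of the full query (the natural join of all relations). -/
def fullOutput [Fintype ι] [DecidableEq α] {D : Type u} (attr : ι → Finset α)
    (I : Inst attr D) : Set (Tuple D (attrsOf attr Finset.univ)) :=
  output attr I Finset.univ

/-- An instance is *fully reduced* if every relation equals the projection of the
full output onto its attributes. -/
def FullyReduced [Fintype ι] [DecidableEq α] {D : Type u} (attr : ι → Finset α)
    (I : Inst attr D) : Prop :=
  ∀ R : ι,
    I.rel R = restrict (attr_subset_attrsOf attr (Finset.mem_univ R)) '' fullOutput attr I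

/-- The subjoin given by the set `S` of relations is *safe*: on every fully reduced
instance, its output is the projection of the full output onto its attributes. -/
def Safe [Fintype ι] [DecidableEq α] (attr : ι → Finset α) (S : Finset ι) : Prop :=
  ∀ (D : Type u) (I : Inst attr D), FullyReduced attr I →
    output attr I S =
      restrict (attrsOf_mono attr (Finset.subset_univ S)) '' fullOutput attr I

/-- The *join graph* of the query: vertices are the relations, two distinct relations
being adjacent iff they share an attribute. -/
def joinGraph [DecidableEq α] (attr : ι → Finset α) : SimpleGraph ι where
  Adj R S := R ≠ S ∧ (attr R ∩ attr S).Nonempty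
  symm := by
    constructor
    intro R S h
    exact ⟨h.1.symm, by rw [Finset.inter_comm]; exact h.2⟩
  loopless := by constructor; intro R h; exact h.1 rfl

/-- `T` is a spanning tree of the graph `G` (a tree on the same vertex set all of whose
edges are edges of `G`). -/
def IsSpanningTree (G T : SimpleGraph ι) : Prop :=
  T ≤ G ∧ T.IsTree

/-- `T` is a *join tree* of the query: a spanning tree of the join graph such that, for
every attribute `A` (occurring in the query), the relations containing `A` induce a
connected subgraph of `T`. -/
def IsJoinTree [DecidableEq α] (attr : ι → Finset α) (T : SimpleGraph ι) : Prop :=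
  IsSpanningTree (joinGraph attr) T ∧
    ∀ A : α, (∃ R : ι, A ∈ attr R) → (T.induce {R : ι | A ∈ attr R}).Connected

/-- The query is (α-)acyclic iff it has a join tree. -/
def Acyclic [DecidableEq α] (attr : ι → Finset α) : Prop :=
  ∃ T : SimpleGraph ι, IsJoinTree attr T

/-- The weight of an edge `{R, S}`: the number of shared attributes `|attr R ∩ attr S|`. -/
def edgeWeight [DecidableEq α] (attr : ι → Finset α) : Sym2 ι → ℕ :=
  Sym2.lift ⟨fun R S => (attr R ∩ attr S).card, fun R S => by simp [Finset.inter_comm]⟩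

/-- The total weight of (the edges of) a graph `T`. -/
noncomputable def weight [DecidableEq α] (attr : ι → Finset α) (T : SimpleGraph ι) : ℕ :=
  ∑ᶠ e ∈ T.edgeSet, edgeWeight attr e

/-- `T` is a maximum spanning tree of the weighted join graph. -/
def IsMaxSpanningTree [DecidableEq α] (attr : ι → Finset α) (T : SimpleGraph ι) : Prop :=
  IsSpanningTree (joinGraph attr) T ∧
    ∀ T' : SimpleGraph ι, IsSpanningTree (joinGraph attr) T' →
      weight attr T' ≤ weight attr T

/-- γ-acyclicity: α-acyclicity together with the absence of a γ-cycle of size 3,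
i.e. of three distinct relations `R, S, T` and three distinct attributes `x, y, z`
with `x, y ∈ attr R`, `y, z ∈ attr S` and `x, y, z ∈ attr T`. -/
def GammaAcyclic [DecidableEq α] (attr : ι → Finset α) : Prop :=
  Acyclic attr ∧
    ¬ ∃ (R S T : ι) (x y z : α),
        R ≠ S ∧ R ≠ T ∧ S ≠ T ∧ x ≠ y ∧ x ≠ z ∧ y ≠ z ∧
        x ∈ attr R ∧ y ∈ attr R ∧ y ∈ attr S ∧ z ∈ attr S ∧
        x ∈ attr T ∧ y ∈ attr T ∧ z ∈ attr T

/-- A *connected subjoin*: a nonempty set of relations inducing a connected subgraph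
of the join graph. -/
def ConnectedSubjoin [DecidableEq α] (attr : ι → Finset α) (S : Finset ι) : Prop :=
  S.Nonempty ∧ ((joinGraph attr).induce (S : Set ι)).Connected

/-- The number of edges of `T` whose both endpoints contain the attribute `A`. -/
noncomputable def eCount (attr : ι → Finset α) (T : SimpleGraph ι) (A : α) : ℕ :=
  {e ∈ T.edgeSet | ∀ R ∈ e, A ∈ attr R}.ncard

/-- The number of relations whose attribute set contains `A`. -/
noncomputable def nCount (attr : ι → Finset α) (A : α) : ℕ :=
  {R : ι | A ∈ attr R}.ncard

/-- A (binary) join expression over the relation symbols `ι`. -/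
inductive JoinExpr (ι : Type) : Type where
  | leaf : ι → JoinExpr ι
  | node : JoinExpr ι → JoinExpr ι → JoinExpr ι

namespace JoinExpr

/-- The list of leaves of a join expression. -/
def leaves {ι : Type} : JoinExpr ι → List ι
  | leaf R => [R]
  | node l r => l.leaves ++ r.leaves

/-- The set of relations appearing in a join expression. -/
def rels {ι : Type} [DecidableEq ι] : JoinExpr ι → Finset ι
  | leaf R => {R}
  | node l r => l.rels ∪ r.rels

/-- The leaves of the expression are exactly the relations of the query,
each occurring once. -/
def Complete {ι : Type} (θ : JoinExpr ι) : Prop :=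
  θ.leaves.Nodup ∧ ∀ R : ι, R ∈ θ.leaves

/-- The expression has no Cartesian products: at every internal node, the relations of the
two subtrees are joined by at least one edge of `G`. -/
def ConnectedExpr {ι : Type} [DecidableEq ι] (G : SimpleGraph ι) : JoinExpr ι → Prop
  | leaf _ => True
  | node l r =>
      (∃ R ∈ l.rels, ∃ S ∈ r.rels, G.Adj R S) ∧ ConnectedExpr G l ∧ ConnectedExpr G r

/-- The expression is *monotone* on the instance `I`: at every internal node
`θ' = θ'₁ ⋈ θ'₂`, the output of each child equals the projection of the output of the
node onto the child's attributes (no tuple of either input is removed by the join). -/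
def MonotoneOn {ι α : Type} [DecidableEq ι] [DecidableEq α] {D : Type u}
    (attr : ι → Finset α) (I : Inst attr D) : JoinExpr ι → Prop
  | leaf _ => True
  | node l r =>
      output attr I l.rels =
        restrict (attrsOf_mono attr Finset.subset_union_left) ''
          output attr I (l.rels ∪ r.rels) ∧
      output attr I r.rels =
        restrict (attrsOf_mono attr Finset.subset_union_right) ''
          output attr I (l.rels ∪ r.rels) ∧
      MonotoneOn attr I l ∧ MonotoneOn attr I r

end JoinExpr

/-- Two tuples (over possibly different attribute sets) *agree* on their common attributes. -/
def AgreeOn {α : Type} {D : Type u} {X Y : Finset α} (t : Tuple D X) (s : Tuple D Y) : Prop :=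
  ∀ (a : α) (ha : a ∈ X) (hb : a ∈ Y), t ⟨a, ha⟩ = s ⟨a, hb⟩

/-- The semi-join `R ⋉ S` on the instance `I`: the tuples of `I.rel R` having a match
in `I.rel S` (a tuple agreeing with them on `attr R ∩ attr S`). -/
def semiJoin {D : Type u} (attr : ι → Finset α) (I : Inst attr D) (R S : ι) :
    Set (Tuple D (attr R)) :=
  {t ∈ I.rel R | ∃ s ∈ I.rel S, AgreeOn t s}

/-- The instance obtained from `I` by replacing the content of relation `R` with the
semi-join `R ⋉ S` (all other relations unchanged). -/
def Inst.semiJoinUpdate [DecidableEq ι] {attr : ι → Finset α} {D : Type u}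
    (I : Inst attr D) (R S : ι) : Inst attr D where
  rel := Function.update I.rel R (semiJoin attr I R S)
  finite := by
    intro R'
    rcases eq_or_ne R' R with rfl | h
    · rw [Function.update_self]
      exact (I.finite R').subset fun t ht => ht.1
    · rw [Function.update_of_ne h]
      exact I.finite R'

/-- The forward pass of the semi-join phase: process the vertices in the order given by
the list `L`; when processing a vertex `R`, successively replace its content by `R ⋉ S`
for each of its children `S` (listed by `childList R`). -/
def forwardPass [DecidableEq ι] {attr : ι → Finset α} {D : Type u}
    (I : Inst attr D) (L : List ι) (childList : ι → List ι) : Inst attr D :=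
  L.foldl (fun J R => (childList R).foldl (fun K S => K.semiJoinUpdate R S) J) I

/-- The backward pass of the semi-join phase: process the vertices in the order given by
the list `L`; when processing a non-root vertex `R`, replace its content by `R ⋉ par R`. -/
def backwardPass [DecidableEq ι] {attr : ι → Finset α} {D : Type u}
    (I : Inst attr D) (L : List ι) (r : ι) (par : ι → ι) : Inst attr D :=
  L.foldl (fun J R => if R = r then J else J.semiJoinUpdate R (par R)) I

end JoinQuery

/-!
Give each attribute `A` the count `eCount T A` of edges of `T` both of whose endpoints contain `A`;
then the weight of `T` is `∑ A, eCount T A`. In a forest the relations containing `A` span at most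
`nCount A - 1` edges, with equality exactly when they induce a connected subgraph. A join tree
attains this bound for every `A`, so a spanning tree of at least its weight must attain it for
every `A` as well.
-/

namespace SimpleGraph

variable {V : Type*} {G : SimpleGraph V}

theorem image_val_edgeSet_induce (s : Set V) :
    Sym2.map Subtype.val '' (G.induce s).edgeSet = {e ∈ G.edgeSet | ∀ v ∈ e, v ∈ s} := by
  ext e
  induction e using Sym2.ind with
  | _ x y =>
    constructor
    · rintro ⟨e, he, hxy⟩
      induction e using Sym2.ind
      aesop (add simp adj_comm)
    · rintro ⟨h, hs⟩
      exact ⟨s(⟨x, hs x (Sym2.mem_mk_left x y)⟩, ⟨y, hs y (Sym2.mem_mk_right x y)⟩), h, rfl⟩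

theorem ncard_edgeSet_induce (s : Set V) :
    (G.induce s).edgeSet.ncard = {e ∈ G.edgeSet | ∀ v ∈ e, v ∈ s}.ncard := by
  rw [← image_val_edgeSet_induce,
    Set.ncard_image_of_injective _ (Sym2.map.injective Subtype.val_injective)]

theorem IsAcyclic.exists_isTree_le [Nonempty V] (hG : G.IsAcyclic) : ∃ F, G ≤ F ∧ F.IsTree := by
  obtain ⟨F, hGF, -, hF⟩ := connected_top.exists_isTree_le_of_le_of_isAcyclic le_top hG
  exact ⟨F, hGF, hF⟩

variable [Finite V]

theorem IsAcyclic.ncard_edgeSet_add_one_le [Nonempty V] (hG : G.IsAcyclic) :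
    G.edgeSet.ncard + 1 ≤ Nat.card V := by
  obtain ⟨F, hGF, hF⟩ := hG.exists_isTree_le
  calc G.edgeSet.ncard + 1 ≤ F.edgeSet.ncard + 1 :=
        Nat.add_le_add_right (Set.ncard_le_ncard (edgeSet_mono hGF)) 1
    _ = Nat.card V := (isTree_iff_connected_and_card.1 hF).2

theorem IsAcyclic.connected_iff_ncard_edgeSet_add_one (hG : G.IsAcyclic) :
    G.Connected ↔ G.edgeSet.ncard + 1 = Nat.card V := by
  refine ⟨fun h => (isTree_iff_connected_and_card.1 ⟨h, hG⟩).2, fun hcard => ?_⟩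
  have : Nonempty V := (Nat.card_pos_iff.1 (hcard ▸ Nat.succ_pos _)).1
  obtain ⟨F, hGF, hF⟩ := hG.exists_isTree_le
  have hFcard := (isTree_iff_connected_and_card.1 hF).2
  rw [Nat.card_coe_set_eq] at hFcard
  have hGF_eq : G = F :=
    edgeSet_inj.1 (Set.eq_of_subset_of_ncard_le (edgeSet_mono hGF) (by omega))
  exact hGF_eq ▸ hF.connected

end SimpleGraph

namespace JoinQuery

open Finset SimpleGraph

variable {ι α : Type} {attr : ι → Finset α}

theorem mem_attrsOf_univ [Fintype ι] [DecidableEq α] {A : α} :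
    A ∈ attrsOf attr univ ↔ ∃ R, A ∈ attr R := by
  simp [attrsOf]

open Classical in
theorem edgeWeight_eq_card_filter [Fintype ι] [DecidableEq α] (e : Sym2 ι) :
    edgeWeight attr e = #{A ∈ attrsOf attr univ | ∀ R ∈ e, A ∈ attr R} := by
  induction e using Sym2.ind with
  | _ R S =>
    show #(attr R ∩ attr S) = _
    congr 1
    ext A
    simp only [mem_inter, Sym2.mem_iff, forall_eq_or_imp, forall_eq, mem_filter,
      mem_attrsOf_univ, iff_and_self, and_imp]
    exact fun hR _ => ⟨R, hR⟩

theorem weight_eq_sum_eCount [Fintype ι] [DecidableEq α] (T : SimpleGraph ι) :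
    weight attr T = ∑ A ∈ attrsOf attr univ, eCount attr T A := by
  classical
  have hE : T.edgeSet.Finite := Set.toFinite _
  rw [weight, ← hE.coe_toFinset, finsum_mem_coe_finset]
  simp only [edgeWeight_eq_card_filter]
  refine (sum_card_bipartiteAbove_eq_sum_card_bipartiteBelow
    (r := fun e A => ∀ R ∈ e, A ∈ attr R)).trans (sum_congr rfl fun A _ => ?_)
  rw [eCount, ← Set.ncard_coe_finset]
  simp

theorem connected_induce_iff_eCount_add_one [Finite ι] {T : SimpleGraph ι} (hT : T.IsAcyclic)
    (A : α) :
    (T.induce {R | A ∈ attr R}).Connected ↔ eCount attr T A + 1 = nCount attr A := by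
  rw [(hT.induce _).connected_iff_ncard_edgeSet_add_one, ncard_edgeSet_induce]
  rfl

theorem eCount_add_one_le_nCount [Finite ι] {T : SimpleGraph ι} (hT : T.IsAcyclic) {A : α}
    (hA : ∃ R, A ∈ attr R) : eCount attr T A + 1 ≤ nCount attr A := by
  obtain ⟨R, hR⟩ := hA
  have : Nonempty {R | A ∈ attr R} := ⟨⟨R, hR⟩⟩
  have := (hT.induce {R | A ∈ attr R}).ncard_edgeSet_add_one_le
  rwa [ncard_edgeSet_induce] at this

theorem maxSpanningTree_isJoinTree_general {ι α : Type} [Fintype ι] [DecidableEq α]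
    (attr : ι → Finset α)
    (hacyclic : Acyclic attr)
    (T : SimpleGraph ι) (hT : IsMaxSpanningTree attr T) :
    IsJoinTree attr T := by
  obtain ⟨T₀, hT₀⟩ := hacyclic
  have hT_acyclic := hT.1.2.isAcyclic
  have hT₀_count : ∀ A, (∃ R, A ∈ attr R) → eCount attr T₀ A + 1 = nCount attr A :=
    fun A hA => (connected_induce_iff_eCount_add_one hT₀.1.2.isAcyclic A).1 (hT₀.2 A hA)
  have hle : ∀ A ∈ attrsOf attr univ, eCount attr T A ≤ eCount attr T₀ A := fun A hA => by
    have h := eCount_add_one_le_nCount hT_acyclic (mem_attrsOf_univ.1 hA)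
    have h₀ := hT₀_count A (mem_attrsOf_univ.1 hA)
    omega
  have hsum : ∑ A ∈ attrsOf attr univ, eCount attr T A =
      ∑ A ∈ attrsOf attr univ, eCount attr T₀ A :=
    le_antisymm (sum_le_sum hle) (by simpa only [weight_eq_sum_eCount] using hT.2 T₀ hT₀.1)
  refine ⟨hT.1, fun A hA => ?_⟩
  rw [connected_induce_iff_eCount_add_one hT_acyclic,
    (sum_eq_sum_iff_of_le hle).1 hsum A (mem_attrsOf_univ.2 hA)]
  exact hT₀_count A hA

theorem maxSpanningTree_isJoinTree {ι α : Type} [Fintype ι] [DecidableEq α]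
    (attr : ι → Finset α) (hattr : ∀ R : ι, (attr R).Nonempty)
    (hconn : (joinGraph attr).Connected)
    (hacyclic : Acyclic attr)
    (T : SimpleGraph ι) (hT : IsMaxSpanningTree attr T) :
    IsJoinTree attr T :=
  maxSpanningTree_isJoinTree_general attr hacyclic T hT

end JoinQuery
end

section
/- Let q be an acyclic natural join query and q' a subjoin of q. If there exists a join tree T of q such that the relations of q' induce a connected subgraph of T, then q' is safe. -/
/-!
Extend a tuple of `q'(I)` relation by relation along the join tree `T`, keeping the set `P` of
relations covered connected in `T`. A relation `R ∉ P` adjacent in `T` to `p ∈ P` shares with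
`P` only attributes of `p`: the relations containing such an attribute form a subtree, and in a
tree every path from `R` into `P` passes through `p`. Full reducedness at `p` provides a tuple of
`R` matching the current tuple on `attr p`, hence on all shared attributes, and the two tuples glue.
-/

namespace SimpleGraph

variable {V : Type*} {G : SimpleGraph V}

lemma Preconnected.exists_walk_support_subset {s : Set V} (h : (G.induce s).Preconnected)
    {x y : V} (hx : x ∈ s) (hy : y ∈ s) : ∃ w : G.Walk x y, ∀ v ∈ w.support, v ∈ s := by
  obtain ⟨w⟩ := h ⟨x, hx⟩ ⟨y, hy⟩
  refine ⟨w.map (Embedding.induce s).toHom, fun v hv => ?_⟩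
  obtain ⟨u, -, rfl⟩ := List.mem_map.mp ((Walk.support_map _ _) ▸ hv)
  exact u.2

lemma Connected.induce_insert_of_adj {s : Set V} (h : (G.induce s).Connected) {x y : V}
    (hy : y ∈ s) (hxy : G.Adj x y) : (G.induce (insert x s)).Connected := by
  have := induce_union_connected (induce_pair_connected_of_adj hxy).preconnected h.preconnected
    ⟨y, by simp, hy⟩
  rwa [Set.insert_union, Set.singleton_union, Set.insert_eq_of_mem hy] at this

/-- In an acyclic graph every path from `x` into `P` enters through the neighbour `y ∈ P`,
since the edge `xy` is a bridge. -/
lemma IsAcyclic.mem_of_adj_of_induce_preconnected (hG : G.IsAcyclic) {x y : V}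
    (hxy : G.Adj x y) {P Q : Set V} (hP : (G.induce P).Preconnected)
    (hQ : (G.induce Q).Preconnected) (hxP : x ∉ P) (hyP : y ∈ P) (hxQ : x ∈ Q)
    (hPQ : (P ∩ Q).Nonempty) : y ∈ Q := by
  obtain ⟨z, hzP, hzQ⟩ := hPQ
  obtain ⟨wP, hwP⟩ := hP.exists_walk_support_subset hyP hzP
  obtain ⟨wQ, hwQ⟩ := hQ.exists_walk_support_subset hxQ hzQ
  have hbridge : G.IsBridge s(x, y) := isAcyclic_iff_forall_isBridge.mp hG hxy
  have hmem := isBridge_iff_forall_walk_mem_edges.mp hbridge (wQ.append wP.reverse)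
  rw [Walk.edges_append, List.mem_append, Walk.edges_reverse, List.mem_reverse] at hmem
  rcases hmem with hmem | hmem
  · exact hwQ y (wQ.snd_mem_support_of_mem_edges hmem)
  · exact absurd (hwP x (wP.fst_mem_support_of_mem_edges hmem)) hxP

end SimpleGraph

namespace JoinQuery

universe v

section Tuples

variable {ι α : Type} [DecidableEq α] {D : Type v} {attr : ι → Finset α}

lemma restrict_image_fullOutput_subset_output [Fintype ι] (I : Inst attr D) (S : Finset ι) :
    restrict (attrsOf_mono attr (Finset.subset_univ S)) '' fullOutput attr I ⊆
      output attr I S := by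
  rintro _ ⟨u, hu, rfl⟩ R hR
  exact hu R (Finset.mem_univ R)

variable [DecidableEq ι]

lemma mem_attr_of_mem_attrsOf_insert {P : Finset ι} {R : ι} {a : α}
    (ha : a ∈ attrsOf attr (insert R P)) (haP : a ∉ attrsOf attr P) : a ∈ attr R := by
  rw [attrsOf, Finset.biUnion_insert, Finset.mem_union] at ha
  exact ha.resolve_right haP

def glue {P : Finset ι} {R : ι} (tP : Tuple D (attrsOf attr P)) (r : Tuple D (attr R)) :
    Tuple D (attrsOf attr (insert R P)) :=
  fun a => if h : a.1 ∈ attrsOf attr P then tP ⟨a.1, h⟩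
    else r ⟨a.1, mem_attr_of_mem_attrsOf_insert a.2 h⟩

lemma restrict_glue {P : Finset ι} {R : ι} (tP : Tuple D (attrsOf attr P))
    (r : Tuple D (attr R)) :
    restrict (attrsOf_mono attr (Finset.subset_insert R P)) (glue tP r) = tP := by
  funext a
  exact dif_pos a.2

lemma restrict_glue_of_agreeOn {P : Finset ι} {R : ι} {tP : Tuple D (attrsOf attr P)}
    {r : Tuple D (attr R)} (hagree : AgreeOn r tP) :
    restrict (attr_subset_attrsOf attr (Finset.mem_insert_self R P)) (glue tP r) = r := by
  funext a
  show (if h : a.1 ∈ attrsOf attr P then tP ⟨a.1, h⟩ else _) = _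
  split_ifs with h
  · exact (hagree a.1 a.2 h).symm
  · rfl

lemma glue_mem_output {I : Inst attr D} {P : Finset ι} {R : ι}
    {tP : Tuple D (attrsOf attr P)} {r : Tuple D (attr R)} (htP : tP ∈ output attr I P)
    (hr : r ∈ I.rel R) (hagree : AgreeOn r tP) : glue tP r ∈ output attr I (insert R P) := by
  intro R' hR'
  rcases Finset.mem_insert.mp hR' with rfl | hR'P
  · rw [restrict_glue_of_agreeOn hagree]
    exact hr
  · rw [← restrict_glue tP r] at htP
    exact htP R' hR'P

end Tuples

section JoinTree

variable {ι α : Type} [DecidableEq α] {attr : ι → Finset α} {T : SimpleGraph ι}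

lemma IsJoinTree.mem_attr_of_adj (hT : IsJoinTree attr T) {P : Set ι}
    (hP : (T.induce P).Preconnected) {R p : ι} (hRP : R ∉ P) (hpP : p ∈ P) (hRp : T.Adj R p)
    {a : α} (haR : a ∈ attr R) {R' : ι} (hR'P : R' ∈ P) (haR' : a ∈ attr R') : a ∈ attr p :=
  hT.1.2.isAcyclic.mem_of_adj_of_induce_preconnected hRp hP
    (hT.2 a ⟨R, haR⟩).preconnected hRP hpP haR ⟨R', hR'P, haR'⟩

variable [Fintype ι] [DecidableEq ι] {D : Type v} {I : Inst attr D}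

lemma FullyReduced.exists_output_insert_restrict_eq (hred : FullyReduced attr I)
    (hT : IsJoinTree attr T) {P : Finset ι} (hP : (T.induce (P : Set ι)).Preconnected)
    {R p : ι} (hRP : R ∉ P) (hpP : p ∈ P) (hRp : T.Adj R p)
    {tP : Tuple D (attrsOf attr P)} (htP : tP ∈ output attr I P) :
    ∃ t ∈ output attr I (insert R P),
      restrict (attrsOf_mono attr (Finset.subset_insert R P)) t = tP := by
  obtain ⟨u, hu, hup⟩ : restrict (attr_subset_attrsOf attr hpP) tP ∈
      restrict (attr_subset_attrsOf attr (Finset.mem_univ p)) '' fullOutput attr I :=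
    hred p ▸ htP p hpP
  have hagree : AgreeOn (restrict (attr_subset_attrsOf attr (Finset.mem_univ R)) u) tP := by
    intro a haR haP
    obtain ⟨R', hR'P, haR'⟩ := Finset.mem_biUnion.mp haP
    have hap := hT.mem_attr_of_adj hP hRP hpP hRp haR hR'P haR'
    exact congrFun hup ⟨a, hap⟩
  exact ⟨glue tP _, glue_mem_output htP (hu R (Finset.mem_univ R)) hagree, restrict_glue _ _⟩

lemma FullyReduced.exists_fullOutput_restrict_eq (hred : FullyReduced attr I)
    (hT : IsJoinTree attr T) {P : Finset ι} (hP : (T.induce (P : Set ι)).Connected)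
    {tP : Tuple D (attrsOf attr P)} (htP : tP ∈ output attr I P) :
    ∃ u ∈ fullOutput attr I, restrict (attrsOf_mono attr (Finset.subset_univ P)) u = tP := by
  by_cases hPu : P = Finset.univ
  · subst hPu
    exact ⟨tP, htP, rfl⟩
  obtain ⟨q, hq⟩ := not_forall.mp (mt Finset.eq_univ_iff_forall.mpr hPu)
  obtain ⟨p₀, hp₀⟩ := hP.nonempty
  obtain ⟨w⟩ := hT.1.2.connected.preconnected p₀ q
  obtain ⟨d, -, hdP, hdP'⟩ := w.exists_boundary_dart (P : Set ι) hp₀ hq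
  obtain ⟨t, ht, htP'⟩ :=
    hred.exists_output_insert_restrict_eq hT hP.preconnected hdP' hdP d.adj.symm htP
  have hP' : (T.induce (insert d.snd P : Finset ι)).Connected := by
    rw [Finset.coe_insert]
    exact hP.induce_insert_of_adj hdP d.adj.symm
  obtain ⟨u, hu, rfl⟩ := hred.exists_fullOutput_restrict_eq hT hP' ht
  exact ⟨u, hu, htP'⟩
termination_by Pᶜ.card
decreasing_by
  rw [Finset.compl_insert]
  exact Finset.card_erase_lt_of_mem (Finset.mem_compl.mpr hdP')

end JoinTree

theorem safe_of_connected_in_some_joinTree_general {ι α : Type} [Fintype ι] [DecidableEq α]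
    (attr : ι → Finset α)
    (S : Finset ι)
    (hex : ∃ T : SimpleGraph ι, IsJoinTree attr T ∧ (T.induce (S : Set ι)).Connected) :
    Safe.{v} attr S := by
  classical
  intro D I hred
  obtain ⟨T, hT, hS⟩ := hex
  refine subset_antisymm (fun t ht => ?_) (restrict_image_fullOutput_subset_output I S)
  obtain ⟨u, hu, rfl⟩ := hred.exists_fullOutput_restrict_eq hT hS ht
  exact ⟨u, hu, rfl⟩

theorem safe_of_connected_in_some_joinTree {ι α : Type} [Fintype ι] [DecidableEq α]
    (attr : ι → Finset α) (hattr : ∀ R : ι, (attr R).Nonempty)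
    (hconn : (joinGraph attr).Connected)
    (hacyclic : Acyclic attr)
    (S : Finset ι) (hS : S.Nonempty)
    (hex : ∃ T : SimpleGraph ι, IsJoinTree attr T ∧ (T.induce (S : Set ι)).Connected) :
    Safe.{v} attr S :=
  safe_of_connected_in_some_joinTree_general attr S hex

end JoinQuery
end

section
/- Let q be a natural join query with connected join graph. If every connected subjoin of q is safe, then every connected join expression θ of q is monotone on every fully reduced instance I. -/
namespace JoinQuery

universe v

/-! Every subexpression of a connected join expression is a connected subjoin, hence safe, so
its output is the projection of `q(I)`; a child's output is then the projection of its
parent's, because projections compose. -/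

theorem restrict_comp_restrict {α : Type} {D : Type u} {X Y Z : Finset α}
    (h₁ : Z ⊆ Y) (h₂ : Y ⊆ X) :
    restrict (D := D) h₁ ∘ restrict h₂ = restrict (h₁.trans h₂) :=
  rfl

theorem Safe.output_eq_image_output {ι α : Type} [Fintype ι] [DecidableEq α]
    {attr : ι → Finset α} {S T : Finset ι} (hS : Safe.{u} attr S) (hT : Safe.{u} attr T)
    (hST : S ⊆ T) {D : Type u} {I : Inst attr D} (hI : FullyReduced attr I) :
    output attr I S = restrict (attrsOf_mono attr hST) '' output attr I T := by
  rw [hS D I hI, hT D I hI, ← Set.image_comp, restrict_comp_restrict]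

namespace JoinExpr

theorem rels_nonempty {ι : Type} [DecidableEq ι] (θ : JoinExpr ι) : θ.rels.Nonempty := by
  induction θ with
  | leaf R => exact Finset.singleton_nonempty R
  | node l r ihl _ => exact ihl.mono Finset.subset_union_left

theorem ConnectedExpr.induce_rels_connected {ι : Type} [DecidableEq ι] {G : SimpleGraph ι}
    {θ : JoinExpr ι} (h : ConnectedExpr G θ) : (G.induce (θ.rels : Set ι)).Connected := by
  induction θ with
  | leaf R =>
      rw [rels, Finset.coe_singleton, SimpleGraph.induce_singleton_eq_top]
      exact SimpleGraph.connected_top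
  | node l r ihl ihr =>
      obtain ⟨⟨R, hR, S, hS, hadj⟩, hl, hr⟩ := h
      rw [rels, Finset.coe_union]
      exact SimpleGraph.connected_induce_union (ihl hl).preconnected (ihr hr).preconnected
        hR hS hadj

theorem ConnectedExpr.connectedSubjoin {ι α : Type} [DecidableEq ι] [DecidableEq α]
    {attr : ι → Finset α} {θ : JoinExpr ι} (h : ConnectedExpr (joinGraph attr) θ) :
    ConnectedSubjoin attr θ.rels :=
  ⟨θ.rels_nonempty, h.induce_rels_connected⟩

theorem ConnectedExpr.monotoneOn {ι α : Type} [Fintype ι] [DecidableEq ι] [DecidableEq α]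
    {attr : ι → Finset α} (hsafe : ∀ S : Finset ι, ConnectedSubjoin attr S → Safe.{u} attr S)
    {θ : JoinExpr ι} (hθ : ConnectedExpr (joinGraph attr) θ)
    {D : Type u} {I : Inst attr D} (hI : FullyReduced attr I) :
    MonotoneOn attr I θ := by
  induction θ with
  | leaf _ => trivial
  | node l r ihl ihr =>
      have hlr : Safe attr (l.rels ∪ r.rels) := hsafe _ hθ.connectedSubjoin
      obtain ⟨-, hl, hr⟩ := hθ
      exact ⟨(hsafe _ hl.connectedSubjoin).output_eq_image_output hlr
          Finset.subset_union_left hI,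
        (hsafe _ hr.connectedSubjoin).output_eq_image_output hlr
          Finset.subset_union_right hI,
        ihl hl, ihr hr⟩

end JoinExpr

theorem monotone_of_safe_general {ι α : Type} [Fintype ι] [DecidableEq ι] [DecidableEq α]
    (attr : ι → Finset α)
    (hsafe : ∀ S : Finset ι, ConnectedSubjoin attr S → Safe.{v} attr S) :
    ∀ θ : JoinExpr ι, θ.Complete → JoinExpr.ConnectedExpr (joinGraph attr) θ →
      ∀ (D : Type v) (I : Inst attr D), FullyReduced attr I →
        JoinExpr.MonotoneOn attr I θ :=
  fun _ _ hθ _ _ hI => hθ.monotoneOn hsafe hI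

theorem monotone_of_safe {ι α : Type} [Fintype ι] [DecidableEq ι] [DecidableEq α]
    (attr : ι → Finset α) (hattr : ∀ R : ι, (attr R).Nonempty)
    (hconn : (joinGraph attr).Connected)
    (hsafe : ∀ S : Finset ι, ConnectedSubjoin attr S → Safe.{v} attr S) :
    ∀ θ : JoinExpr ι, θ.Complete → JoinExpr.ConnectedExpr (joinGraph attr) θ →
      ∀ (D : Type v) (I : Inst attr D), FullyReduced attr I →
        JoinExpr.MonotoneOn attr I θ :=
  monotone_of_safe_general attr hsafe

end JoinQuery
end
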